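/- Let A be diagonalizable as A = C · diag(r e^{iθ}, e^{iφ}, r⁻¹ e^{iθ}) · C⁻¹ over ℍ with 0 < r < 1, θ, φ ∈ (0,π), and let A' = C · D · diag(r e^{iθ}, e^{iφ}, r⁻¹ e^{iθ}) · D⁻¹ · C⁻¹ where D = diag(q₁, q₃, q₂) with nonzero quaternions q₁, q₂, q₃. Then A = A' if and only if each qₘ lies in ℂ = ℝ + ℝi. -/

import Mathlib

open Quaternion Matrix

/-- The quaternion `e^{iθ} = cos θ + i sin θ`. -/
noncomputable def eI (θ : ℝ) : ℍ[ℝ] := ⟨Real.cos θ, Real.sin θ, 0, 0⟩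

/-- A quaternion lies in the copy of `ℂ = ℝ + ℝi`. -/
def inC (q : ℍ[ℝ]) : Prop := q.imJ = 0 ∧ q.imK = 0

/-! Cancelling `C`, `A = A'` says that each `qₘ` commutes with the corresponding eigenvalue,
a nonzero real multiple of `e^{iθ}` or `e^{iφ}`. The commutator `q e^{iθ} - e^{iθ} q` is
`2 sin θ (q.imK j - q.imJ k)`, so for `sin θ ≠ 0` it vanishes exactly when `q ∈ ℂ`. -/

lemma commute_eI_iff {θ : ℝ} (hθ : Real.sin θ ≠ 0) (q : ℍ[ℝ]) :
    Commute q (eI θ) ↔ inC q := by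
  rw [Commute, SemiconjBy, Quaternion.ext_iff]
  simp only [re_mul, imI_mul, imJ_mul, imK_mul]
  simp only [eI, inC]
  constructor
  · rintro ⟨-, -, hK, hJ⟩
    have hK' : Real.sin θ * (2 * q.imK) = 0 := by linear_combination hK
    have hJ' : Real.sin θ * (2 * q.imJ) = 0 := by linear_combination -hJ
    constructor
    · simpa [hθ] using hJ'
    · simpa [hθ] using hK'
  · rintro ⟨hJ, hK⟩
    refine ⟨by ring, by ring, ?_, ?_⟩ <;> simp only [hJ, hK] <;> ring

lemma commute_smul_eI_iff {t θ : ℝ} (ht : t ≠ 0) (hθ : Real.sin θ ≠ 0) (q : ℍ[ℝ]) :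
    Commute q (t • eI θ) ↔ inC q := by
  rw [← commute_eI_iff hθ q, Commute, SemiconjBy, mul_smul_comm, smul_mul_assoc,
    (smul_right_injective _ ht).eq_iff]
  rfl

lemma eq_mul_mul_inv_iff_commute {G : Type*} [GroupWithZero G] {q : G} (hq : q ≠ 0) (a : G) :
    a = q * a * q⁻¹ ↔ Commute q a := by
  rw [eq_mul_inv_iff_mul_eq₀ hq, eq_comm]
  rfl

lemma diagonal_eq_diagonal_mul_diagonal_mul_diagonal_iff {n R : Type*} [Fintype n]
    [DecidableEq n] [Semiring R] (d p q : n → R) :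
    diagonal d = diagonal p * diagonal d * diagonal q ↔ ∀ i, d i = p i * d i * q i := by
  rw [diagonal_mul_diagonal, diagonal_mul_diagonal, diagonal_injective.eq_iff, funext_iff]

theorem conjugated_loxodromic_eq_iff_projective_points_general
    (r θ φ : ℝ) (hr0 : 0 < r)
    (hθ : Real.sin θ ≠ 0) (hφ : Real.sin φ ≠ 0)
    (q1 q2 q3 : ℍ[ℝ]) (hq1 : q1 ≠ 0) (hq2 : q2 ≠ 0) (hq3 : q3 ≠ 0)
    (C : (Matrix (Fin 3) (Fin 3) ℍ[ℝ])ˣ) :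
    (C.val * Matrix.diagonal ![r • eI θ, eI φ, r⁻¹ • eI θ] * (C⁻¹).val =
      C.val *
        (Matrix.diagonal ![q1, q3, q2] *
          Matrix.diagonal ![r • eI θ, eI φ, r⁻¹ • eI θ] *
          Matrix.diagonal ![q1⁻¹, q3⁻¹, q2⁻¹]) * (C⁻¹).val) ↔
    (inC q1 ∧ inC q2 ∧ inC q3) := by
  rw [Units.mul_left_inj, Units.mul_right_inj,
    diagonal_eq_diagonal_mul_diagonal_mul_diagonal_iff, Fin.forall_fin_succ]
  simp only [Fin.forall_fin_two, cons_val_zero, cons_val_succ, cons_val_one]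
  rw [eq_mul_mul_inv_iff_commute hq1, eq_mul_mul_inv_iff_commute hq3,
    eq_mul_mul_inv_iff_commute hq2, commute_smul_eI_iff hr0.ne' hθ, commute_eI_iff hφ,
    commute_smul_eI_iff (inv_ne_zero hr0.ne') hθ]
  tauto

/-- Let `A = C · diag(r e^{iθ}, e^{iφ}, r⁻¹ e^{iθ}) · C⁻¹` and
`A' = C · D · diag(r e^{iθ}, e^{iφ}, r⁻¹ e^{iθ}) · D⁻¹ · C⁻¹` with
`D = diag(q₁,q₃,q₂)`, the `qₘ` nonzero.  Then `A = A'` iff each `qₘ ∈ ℂ`. -/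
theorem conjugated_loxodromic_eq_iff_projective_points
    (r θ φ : ℝ) (hr0 : 0 < r) (hr1 : r < 1)
    (hθ : Real.sin θ ≠ 0) (hφ : Real.sin φ ≠ 0)
    (q1 q2 q3 : ℍ[ℝ]) (hq1 : q1 ≠ 0) (hq2 : q2 ≠ 0) (hq3 : q3 ≠ 0)
    (C : (Matrix (Fin 3) (Fin 3) ℍ[ℝ])ˣ) :
    (C.val * Matrix.diagonal ![r • eI θ, eI φ, r⁻¹ • eI θ] * (C⁻¹).val =
      C.val *
        (Matrix.diagonal ![q1, q3, q2] *
          Matrix.diagonal ![r • eI θ, eI φ, r⁻¹ • eI θ] *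
          Matrix.diagonal ![q1⁻¹, q3⁻¹, q2⁻¹]) * (C⁻¹).val) ↔
    (inC q1 ∧ inC q2 ∧ inC q3) :=
  conjugated_loxodromic_eq_iff_projective_points_general r θ φ hr0 hθ hφ q1 q2 q3 hq1 hq2 hq3 C
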